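/- arXiv:1705.05614 — 4 statements merged into one kernel-verified Lean document; each statement's English description precedes it below -/
import Mathlib

section
/- For every natural number k ≥ 2, γ_k := 2 ∑_{j odd, 1 ≤ j ≤ k} a_{j,k}/j^2 < π²/4, where a_{j,k} = C(2k, k+j)/C(2k, k). -/
open Real

set_option maxHeartbeats 1000000 in
/-- The sum of 1/j² over odd j, as an indicator function, has sum π²/8. -/
lemma hasSum_odd_inv_sq :
    HasSum (fun j : ℕ => if Odd j then (1 : ℝ) / (j : ℝ) ^ 2 else 0) (π ^ 2 / 8) := by
  set f : ℕ → ℝ := fun n : ℕ => (1 : ℝ) / (n : ℝ) ^ 2 with hf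
  have hfull : HasSum f (π ^ 2 / 6) := hasSum_zeta_two
  have heven : HasSum (fun n : ℕ => f (2 * n)) (π ^ 2 / 24) := by
    have h2 := hfull.mul_left (1 / 4)
    have h : (fun n : ℕ => (1 / 4 : ℝ) * f n) = fun n : ℕ => f (2 * n) := by
      funext n
      simp only [hf]
      push_cast
      ring
    rw [h] at h2
    convert h2 using 1
    rfl
    ring
  have hinj : Function.Injective (fun n : ℕ => 2 * n + 1) := fun a b h => by
    simpa using h
  have hodd_summable : Summable (fun n : ℕ => f (2 * n + 1)) :=
    hfull.summable.comp_injective hinj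
  obtain ⟨b, hodd⟩ := hodd_summable
  have hsum : HasSum f (π ^ 2 / 24 + b) := heven.even_add_odd hodd
  have hb : b = π ^ 2 / 8 := by
    have := hfull.unique hsum
    linarith
  subst hb
  have hvan : ∀ j : ℕ, j ∉ Set.range (fun n : ℕ => 2 * n + 1) →
      (if Odd j then (1 : ℝ) / (j : ℝ) ^ 2 else 0) = 0 := by
    intro j hj
    rw [if_neg]
    intro ⟨m, hm⟩
    exact hj ⟨m, show 2 * m + 1 = j by omega⟩
  rw [← hinj.hasSum_iff hvan]
  convert hodd using 2 with n
  rw [Function.comp_apply, if_pos ⟨n, by omega⟩]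

open Real in
theorem gamma_k_lt (k : ℕ) (hk : 2 ≤ k) :
    2 * ∑ j ∈ (Finset.Icc 1 k).filter (fun j => Odd j),
      ((Nat.choose (2 * k) (k + j) : ℝ) / (Nat.choose (2 * k) k : ℝ)) / (j : ℝ) ^ 2
      < π ^ 2 / 4 := by
  set F := (Finset.Icc 1 k).filter (fun j => Odd j) with hF
  have hchoose_pos : (0 : ℝ) < (Nat.choose (2 * k) k : ℝ) := by
    exact_mod_cast Nat.choose_pos (by omega)
  -- each a_j ≤ 1
  have ha_le : ∀ j ∈ F, ((Nat.choose (2 * k) (k + j) : ℝ) / (Nat.choose (2 * k) k : ℝ)) ≤ 1 := by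
    intro j hj
    rw [div_le_one hchoose_pos]
    exact_mod_cast (Nat.choose_le_middle (k + j) (2 * k)).trans_eq (by rw [Nat.mul_div_cancel_left k (by norm_num : 0 < 2)])
  -- a_1 = k / (k+1)
  have ha1 : ((Nat.choose (2 * k) (k + 1) : ℝ) / (Nat.choose (2 * k) k : ℝ)) = k / (k + 1) := by
    have h := Nat.choose_succ_right_eq (2 * k) k
    have h2 : (2 * k) - k = k := by omega
    rw [h2] at h
    have : ((Nat.choose (2 * k) (k + 1) : ℝ)) * (k + 1) = (Nat.choose (2 * k) k : ℝ) * k := by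
      exact_mod_cast congrArg (Nat.cast : ℕ → ℝ) h
    field_simp
    linarith
  have h1F : 1 ∈ F := by
    simp [hF, Finset.mem_filter, Finset.mem_Icc]
    omega
  -- indicator function g
  set g : ℕ → ℝ := fun j => if Odd j then (1 : ℝ) / (j : ℝ) ^ 2 else 0 with hg
  have hg_nonneg : ∀ j, 0 ≤ g j := by
    intro j
    simp only [hg]
    split <;> positivity
  have hpartial : ∑ j ∈ F, g j ≤ π ^ 2 / 8 :=
    sum_le_hasSum F (fun j _ => hg_nonneg j) hasSum_odd_inv_sq
  have hgF : ∀ j ∈ F, g j = 1 / (j : ℝ) ^ 2 := by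
    intro j hj
    simp only [hg]
    rw [if_pos]
    exact (Finset.mem_filter.mp hj).2
  -- split off j = 1
  rw [← Finset.insert_erase h1F]
  rw [Finset.sum_insert (Finset.notMem_erase 1 F)]
  have hrest : ∑ j ∈ F.erase 1,
      ((Nat.choose (2 * k) (k + j) : ℝ) / (Nat.choose (2 * k) k : ℝ)) / (j : ℝ) ^ 2
      ≤ ∑ j ∈ F.erase 1, g j := by
    apply Finset.sum_le_sum
    intro j hj
    have hjF := Finset.mem_erase.mp hj |>.2
    rw [hgF j hjF]
    have hj1 : 1 ≤ j := (Finset.mem_Icc.mp (Finset.mem_filter.mp hjF).1).1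
    have hjpos : (0 : ℝ) < (j : ℝ) ^ 2 := by positivity
    have h1 := ha_le j hjF
    gcongr
  have hsum_erase : ∑ j ∈ F.erase 1, g j = (∑ j ∈ F, g j) - g 1 := by
    rw [← Finset.insert_erase h1F, Finset.sum_insert (Finset.notMem_erase 1 F)]
    simp [Finset.erase_insert_of_ne, Finset.insert_comm]
  have hg1 : g 1 = 1 := by simp [hg]
  have hterm1 : ((Nat.choose (2 * k) (k + 1) : ℝ) / (Nat.choose (2 * k) k : ℝ)) / (1 : ℝ) ^ 2
      = (k : ℝ) / (k + 1) := by rw [ha1]; ring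
  have hk1 : (k : ℝ) / (k + 1) ≤ 1 - 1 / (k + 1) := by
    have hkpos : (0 : ℝ) < (k : ℝ) + 1 := by positivity
    rw [div_le_iff₀ hkpos]
    field_simp
    linarith
  have heps : (0 : ℝ) < 1 / ((k : ℝ) + 1) := by positivity
  rw [show ((1:ℕ):ℝ) = 1 from Nat.cast_one, hterm1]
  linarith [hrest, hsum_erase, hg1, hpartial]
end

section
/- Let f : ℝ → ℝ be bounded and measurable, h > 0, and k a natural number. Define the distributional/a.e. derivative identity: if f is continuous except at finitely many points, then the 2k-fold convolution f * χ_h^{2k} (where χ_h^{2k} denotes the 2k-fold convolution power of χ_h) is 2k times differentiable a.e. and (f * χ_h^{2k})^{(2k)}(x) = h^{-2k} Δ̂_h^{2k} f(x) for a.e. x, where Δ̂_h^{2k} f(x) = ∑_{j=0}^{2k} (-1)^{2k-j} C(2k,j) f(x + jh - kh). -/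
open MeasureTheory

/-- Convolution of two real functions. -/
noncomputable def conv (f g : ℝ → ℝ) : ℝ → ℝ := fun x => ∫ t : ℝ, f t * g (x - t)

/-- Normalized indicator of `[-h/2, h/2]`. -/
noncomputable def chi (h : ℝ) : ℝ → ℝ := fun x => if |x| ≤ h / 2 then 1 / h else 0

/-- `(m+1)`-fold convolution power of `chi h`: `chiPow h 0 = chi h`,
`chiPow h m = chi h * ⋯ * chi h` (`m+1` factors). -/
noncomputable def chiPow (h : ℝ) : ℕ → ℝ → ℝ
  | 0 => chi h
  | m + 1 => conv (chiPow h m) (chi h)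

/-- Centered `2k`-th finite difference with step `h`. -/
noncomputable def centeredDiff (h : ℝ) (k : ℕ) (f : ℝ → ℝ) : ℝ → ℝ := fun x =>
  ∑ j ∈ Finset.range (2 * k + 1),
    (-1 : ℝ) ^ (2 * k - j) * (Nat.choose (2 * k) j : ℝ) * f (x + j * h - k * h)

namespace ConvAux

open Set Filter

/-- Symmetric difference-quotient operator. -/
noncomputable def Dop (h : ℝ) (F : ℝ → ℝ) : ℝ → ℝ := fun x => (F (x + h / 2) - F (x - h / 2)) / h

/-- Kernels: measurable, bounded, compactly supported. -/
structure Nice (G : ℝ → ℝ) : Prop where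
  meas : Measurable G
  bdd : ∃ C, 0 ≤ C ∧ ∀ x, |G x| ≤ C
  supp : ∃ R, 0 < R ∧ ∀ y, R ≤ |y| → G y = 0

variable {h : ℝ}

lemma chi_meas : Measurable (chi h) := by
  unfold chi
  exact Measurable.ite (measurableSet_le (measurable_norm) measurable_const)
    measurable_const measurable_const

lemma nice_chi (hh : 0 < h) : Nice (chi h) := by
  refine ⟨chi_meas, ⟨1 / h, by positivity, fun x => ?_⟩, ⟨h, hh, fun y hy => ?_⟩⟩
  · unfold chi
    split
    · rw [abs_of_nonneg (by positivity)]
    · simp [abs_nonneg, le_of_lt]; positivity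
  · unfold chi
    rw [if_neg]
    intro hc
    have : h ≤ h / 2 := le_trans hy hc
    linarith

lemma intervalIntegrable_of_bdd {F : ℝ → ℝ} {C : ℝ} (hFm : Measurable F)
    (hFC : ∀ x, |F x| ≤ C) (a b : ℝ) : IntervalIntegrable F volume a b := by
  rw [intervalIntegrable_iff]
  exact Measure.integrableOn_of_bounded measure_Ioc_lt_top.ne hFm.aestronglyMeasurable
    (Filter.Eventually.of_forall fun x => by simpa [Real.norm_eq_abs] using hFC x)

lemma conv_integrable {f G : ℝ → ℝ} {C : ℝ} (hfm : Measurable f) (hfC : ∀ x, |f x| ≤ C)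
    (hG : Nice G) (x : ℝ) : Integrable (fun t => f t * G (x - t)) := by
  obtain ⟨D, hD0, hD⟩ := hG.bdd
  obtain ⟨R, hR0, hR⟩ := hG.supp
  have hC0 : 0 ≤ C := le_trans (abs_nonneg _) (hfC 0)
  have hmeas : Measurable fun t => f t * G (x - t) :=
    hfm.mul (hG.meas.comp (measurable_const.sub measurable_id))
  refine Integrable.mono' (g := (Icc (x - R) (x + R)).indicator fun _ => C * D)
    ?_ hmeas.aestronglyMeasurable (Filter.Eventually.of_forall fun t => ?_)
  · exact (integrable_indicator_iff measurableSet_Icc).2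
      (integrableOn_const measure_Icc_lt_top.ne)
  · rw [Real.norm_eq_abs, abs_mul]
    by_cases ht : t ∈ Icc (x - R) (x + R)
    · rw [indicator_of_mem ht]
      exact mul_le_mul (hfC t) (hD _) (abs_nonneg _) hC0
    · rw [indicator_of_notMem ht]
      have : R ≤ |x - t| := by
        simp only [mem_Icc, not_and_or, not_le] at ht
        rcases ht with ht | ht
        · rw [abs_of_nonneg (by linarith)]; linarith
        · rw [abs_of_nonpos (by linarith)]; linarith
      rw [hR _ this, abs_zero, mul_zero]

lemma conv_chi_eq {F : ℝ → ℝ} (hh : 0 < h) (x : ℝ) :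
    conv F (chi h) x = (∫ t in (x - h / 2)..(x + h / 2), F t) / h := by
  have : (fun t => F t * chi h (x - t))
      = (Icc (x - h / 2) (x + h / 2)).indicator fun t => F t * (1 / h) := by
    funext t
    by_cases ht : t ∈ Icc (x - h / 2) (x + h / 2)
    · rw [indicator_of_mem ht]
      simp only [mem_Icc] at ht
      have : |x - t| ≤ h / 2 := abs_le.2 ⟨by linarith [ht.2], by linarith [ht.1]⟩
      simp [chi, this]
    · rw [indicator_of_notMem ht]
      simp only [mem_Icc, not_and_or, not_le] at ht
      have : ¬ |x - t| ≤ h / 2 := by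
        rw [abs_le]
        rcases ht with ht | ht
        · intro ⟨h1, h2⟩; linarith
        · intro ⟨h1, h2⟩; linarith
      simp [chi, this]
  rw [conv, this, integral_indicator measurableSet_Icc, integral_Icc_eq_integral_Ioc,
    ← intervalIntegral.integral_of_le (by linarith), intervalIntegral.integral_mul_const]
  ring

lemma conv_chi_eq' {F : ℝ → ℝ} {C : ℝ} (hh : 0 < h) (hFm : Measurable F)
    (hFC : ∀ x, |F x| ≤ C) (x : ℝ) :
    conv F (chi h) x
      = ((∫ t in (0:ℝ)..(x + h / 2), F t) - ∫ t in (0:ℝ)..(x - h / 2), F t) / h := by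
  rw [conv_chi_eq hh, intervalIntegral.integral_interval_sub_left
    (intervalIntegrable_of_bdd hFm hFC _ _) (intervalIntegrable_of_bdd hFm hFC _ _)]

lemma conv_chi_continuous {F : ℝ → ℝ} {C : ℝ} (hh : 0 < h) (hFm : Measurable F)
    (hFC : ∀ x, |F x| ≤ C) : Continuous (conv F (chi h)) := by
  have hA : Continuous fun y => ∫ t in (0:ℝ)..y, F t :=
    intervalIntegral.continuous_primitive (intervalIntegrable_of_bdd hFm hFC) 0
  have : Continuous fun x =>
      ((∫ t in (0:ℝ)..(x + h / 2), F t) - ∫ t in (0:ℝ)..(x - h / 2), F t) / h :=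
    ((hA.comp (continuous_id.add continuous_const)).sub
      (hA.comp (continuous_id.sub continuous_const))).div_const h
  exact this.congr fun x => (conv_chi_eq' hh hFm hFC x).symm

lemma conv_chi_hasDerivAt {F : ℝ → ℝ} {C : ℝ} (hh : 0 < h) (hFm : Measurable F)
    (hFC : ∀ x, |F x| ≤ C) {x : ℝ} (hc1 : ContinuousAt F (x + h / 2))
    (hc2 : ContinuousAt F (x - h / 2)) :
    HasDerivAt (conv F (chi h)) (Dop h F x) x := by
  have hA : ∀ y : ℝ, ContinuousAt F y →
      HasDerivAt (fun u => ∫ t in (0:ℝ)..u, F t) (F y) y := fun y hy =>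
    intervalIntegral.integral_hasDerivAt_right (intervalIntegrable_of_bdd hFm hFC 0 y)
      hFm.stronglyMeasurable.stronglyMeasurableAtFilter hy
  have h1 : HasDerivAt (fun u => ∫ t in (0:ℝ)..(u + h / 2), F t) (F (x + h / 2)) x := by
    have := (hA _ hc1).comp x ((hasDerivAt_id x).add_const (h / 2))
    simpa [Function.comp_def] using this
  have h2 : HasDerivAt (fun u => ∫ t in (0:ℝ)..(u - h / 2), F t) (F (x - h / 2)) x := by
    have := (hA _ hc2).comp x ((hasDerivAt_id x).sub_const (h / 2))
    simpa [Function.comp_def] using this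
  have := (h1.sub h2).div_const h
  exact this.congr_of_eventuallyEq
    (Filter.Eventually.of_forall fun y => conv_chi_eq' hh hFm hFC y)

lemma conv_chi_lipschitz {F : ℝ → ℝ} {C : ℝ} (hh : 0 < h) (hFm : Measurable F)
    (hFC : ∀ x, |F x| ≤ C) :
    LipschitzWith (2 * C / h).toNNReal (conv F (chi h)) := by
  have hC0 : 0 ≤ C := le_trans (abs_nonneg _) (hFC 0)
  have key : ∀ a b : ℝ, |(∫ t in (0:ℝ)..b, F t) - ∫ t in (0:ℝ)..a, F t| ≤ C * |b - a| := by
    intro a b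
    rw [intervalIntegral.integral_interval_sub_left (intervalIntegrable_of_bdd hFm hFC _ _)
      (intervalIntegrable_of_bdd hFm hFC _ _)]
    have := intervalIntegral.norm_integral_le_of_norm_le_const
      (C := C) (f := F) (a := a) (b := b) (fun t _ => by simpa [Real.norm_eq_abs] using hFC t)
    simpa [Real.norm_eq_abs] using this
  apply LipschitzWith.of_dist_le_mul
  intro x y
  rw [Real.dist_eq, Real.dist_eq, Real.coe_toNNReal _ (by positivity)]
  rw [conv_chi_eq' hh hFm hFC, conv_chi_eq' hh hFm hFC]
  set A : ℝ → ℝ := fun u => ∫ t in (0:ℝ)..u, F t with hA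
  have e1 : |A (x + h/2) - A (y + h/2)| ≤ C * |x - y| := by
    have := key (y + h/2) (x + h/2); simpa [show x + h/2 - (y + h/2) = x - y by ring] using this
  have e2 : |A (x - h/2) - A (y - h/2)| ≤ C * |x - y| := by
    have := key (y - h/2) (x - h/2); simpa [show x - h/2 - (y - h/2) = x - y by ring] using this
  have heq : (A (x + h/2) - A (x - h/2)) / h - (A (y + h/2) - A (y - h/2)) / h
      = ((A (x + h/2) - A (y + h/2)) - (A (x - h/2) - A (y - h/2))) / h := by ring
  rw [heq, abs_div, abs_of_pos hh, div_le_iff₀ hh]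
  calc |(A (x + h/2) - A (y + h/2)) - (A (x - h/2) - A (y - h/2))|
      ≤ |A (x + h/2) - A (y + h/2)| + |A (x - h/2) - A (y - h/2)| := abs_sub _ _
    _ ≤ C * |x - y| + C * |x - y| := add_le_add e1 e2
    _ = 2 * C / h * |x - y| * h := by field_simp; ring

lemma nice_dop {G : ℝ → ℝ} (hh : 0 < h) (hG : Nice G) : Nice (Dop h G) := by
  obtain ⟨C, hC0, hC⟩ := hG.bdd
  obtain ⟨R, hR0, hR⟩ := hG.supp
  have hm : Measurable (Dop h G) := by
    have := hG.meas
    unfold Dop; fun_prop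
  refine ⟨hm, ⟨2 * C / h, by positivity, fun x => ?_⟩, ⟨R + h, by linarith, fun y hy => ?_⟩⟩
  · rw [Dop, abs_div, abs_of_pos hh, div_le_div_iff_of_pos_right hh]
    calc |G (x + h/2) - G (x - h/2)| ≤ |G (x + h/2)| + |G (x - h/2)| := abs_sub _ _
      _ ≤ C + C := add_le_add (hC _) (hC _)
      _ = 2 * C := by ring
  · have h1 : G (y + h / 2) = 0 := by
      apply hR
      have := abs_add_le (y + h / 2) (-(h / 2))
      rw [abs_neg, abs_of_pos (by positivity : (0:ℝ) < h/2)] at this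
      simp only [add_neg_cancel_right] at this
      linarith
    have h2 : G (y - h / 2) = 0 := by
      apply hR
      have := abs_add_le (y - h / 2) (h / 2)
      rw [abs_of_pos (by positivity : (0:ℝ) < h/2)] at this
      simp only [sub_add_cancel] at this
      linarith
    simp [Dop, h1, h2]

lemma nice_conv_chi {G : ℝ → ℝ} (hh : 0 < h) (hG : Nice G) : Nice (conv G (chi h)) := by
  obtain ⟨C, hC0, hC⟩ := hG.bdd
  obtain ⟨R, hR0, hR⟩ := hG.supp
  refine ⟨(conv_chi_continuous hh hG.meas hC).measurable,
    ⟨C, hC0, fun x => ?_⟩, ⟨R + h, by linarith, fun y hy => ?_⟩⟩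
  · rw [conv_chi_eq hh, abs_div, abs_of_pos hh, div_le_iff₀ hh]
    have := intervalIntegral.norm_integral_le_of_norm_le_const
      (C := C) (f := G) (a := x - h/2) (b := x + h/2)
      (fun t _ => by simpa [Real.norm_eq_abs] using hC t)
    rw [Real.norm_eq_abs] at this
    calc |∫ t in (x - h/2)..(x + h/2), G t| ≤ C * |x + h/2 - (x - h/2)| := this
      _ = C * h := by rw [show x + h/2 - (x - h/2) = h by ring, abs_of_pos hh]
  · rw [conv_chi_eq hh]
    have : ∀ t ∈ Set.uIcc (y - h/2) (y + h/2), G t = 0 := by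
      intro t ht
      rw [Set.uIcc_of_le (by linarith)] at ht
      apply hR
      have h1 : |y - t| ≤ h / 2 :=
        abs_le.2 ⟨by linarith [ht.2], by linarith [ht.1]⟩
      have := abs_add_le t (y - t)
      rw [show t + (y - t) = y by ring] at this
      linarith
    rw [intervalIntegral.integral_congr (g := fun _ => (0:ℝ)) this]
    simp

lemma nice_chiPow (hh : 0 < h) : ∀ n, Nice (chiPow h n)
  | 0 => nice_chi hh
  | n + 1 => nice_conv_chi hh (nice_chiPow hh n)

lemma lip_dop {G : ℝ → ℝ} {L : NNReal} (hh : 0 < h) (hL : LipschitzWith L G) :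
    LipschitzWith (2 * (L : ℝ) / h).toNNReal (Dop h G) := by
  apply LipschitzWith.of_dist_le_mul
  intro x y
  rw [Real.dist_eq, Real.dist_eq, Real.coe_toNNReal _ (by positivity)]
  have e1 : |G (x + h/2) - G (y + h/2)| ≤ (L : ℝ) * |x - y| := by
    have := hL.dist_le_mul (x + h/2) (y + h/2)
    rw [Real.dist_eq, Real.dist_eq, show x + h/2 - (y + h/2) = x - y by ring] at this
    exact this
  have e2 : |G (x - h/2) - G (y - h/2)| ≤ (L : ℝ) * |x - y| := by
    have := hL.dist_le_mul (x - h/2) (y - h/2)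
    rw [Real.dist_eq, Real.dist_eq, show x - h/2 - (y - h/2) = x - y by ring] at this
    exact this
  have heq : Dop h G x - Dop h G y
      = ((G (x + h/2) - G (y + h/2)) - (G (x - h/2) - G (y - h/2))) / h := by
    simp only [Dop]; ring
  rw [heq, abs_div, abs_of_pos hh, div_le_iff₀ hh]
  calc |(G (x + h/2) - G (y + h/2)) - (G (x - h/2) - G (y - h/2))|
      ≤ |G (x + h/2) - G (y + h/2)| + |G (x - h/2) - G (y - h/2)| := abs_sub _ _
    _ ≤ (L:ℝ) * |x - y| + (L:ℝ) * |x - y| := add_le_add e1 e2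
    _ = 2 * (L:ℝ) / h * |x - y| * h := by field_simp; ring

lemma nice_dop_iter {G : ℝ → ℝ} (hh : 0 < h) (hG : Nice G) :
    ∀ n, Nice ((Dop h)^[n] G)
  | 0 => hG
  | n + 1 => by
    rw [Function.iterate_succ_apply']
    exact nice_dop hh (nice_dop_iter hh hG n)

lemma lip_dop_iter {G : ℝ → ℝ} (hh : 0 < h) (hL : ∃ L, LipschitzWith L G) :
    ∀ n, ∃ L, LipschitzWith L ((Dop h)^[n] G)
  | 0 => hL
  | n + 1 => by
    rw [Function.iterate_succ_apply']
    obtain ⟨L, hL'⟩ := lip_dop_iter hh hL n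
    exact ⟨_, lip_dop hh hL'⟩

lemma chi_contAt (hh : 0 < h) : ∀ y ∉ ({-(h/2), h/2} : Finset ℝ), ContinuousAt (chi h) y := by
  intro y hy
  simp only [Finset.mem_insert, Finset.mem_singleton, not_or] at hy
  have hne : |y| ≠ h / 2 := by
    intro hc
    rcases (abs_eq (by positivity)).1 hc with rfl | rfl
    · exact hy.2 rfl
    · exact hy.1 rfl
  rcases lt_or_gt_of_ne hne with hlt | hgt
  · have ho : IsOpen {z : ℝ | |z| < h / 2} := isOpen_lt continuous_abs continuous_const
    have : chi h =ᶠ[nhds y] fun _ => 1 / h :=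
      Filter.eventually_of_mem (ho.mem_nhds hlt) fun z hz => by
        have hz' : |z| < h / 2 := hz
        simp [chi, le_of_lt hz']
    exact ContinuousAt.congr continuousAt_const this.symm
  · have ho : IsOpen {z : ℝ | h / 2 < |z|} := isOpen_lt continuous_const continuous_abs
    have : chi h =ᶠ[nhds y] fun _ => (0:ℝ) :=
      Filter.eventually_of_mem (ho.mem_nhds hgt) fun z hz => by
        simp only [Set.mem_setOf_eq] at hz
        simp [chi, not_le.2 hz]
    exact ContinuousAt.congr continuousAt_const this.symm

lemma contAt_chiPow (hh : 0 < h) (n : ℕ) :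
    ∃ B : Finset ℝ, ∀ y ∉ B, ContinuousAt (chiPow h n) y := by
  cases n with
  | zero => exact ⟨{-(h/2), h/2}, chi_contAt hh⟩
  | succ n =>
    obtain ⟨C, hC0, hC⟩ := (nice_chiPow hh n).bdd
    exact ⟨∅, fun y _ =>
      (conv_chi_continuous hh (nice_chiPow hh n).meas hC).continuousAt⟩

lemma dop_hasDerivAt {H : ℝ → ℝ} {d1 d2 y : ℝ} (hh : 0 < h)
    (h1 : HasDerivAt H d1 (y + h / 2)) (h2 : HasDerivAt H d2 (y - h / 2)) :
    HasDerivAt (Dop h H) ((d1 - d2) / h) y := by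
  have a1 : HasDerivAt (fun x => H (x + h / 2)) d1 y := by
    simpa [Function.comp_def] using h1.comp y ((hasDerivAt_id y).add_const (h / 2))
  have a2 : HasDerivAt (fun x => H (x - h / 2)) d2 y := by
    simpa [Function.comp_def] using h2.comp y ((hasDerivAt_id y).sub_const (h / 2))
  exact (a1.sub a2).div_const h

lemma iter_hasDerivAt (hh : 0 < h) {H H' : ℝ → ℝ} (B : Finset ℝ)
    (hB : ∀ y ∉ B, HasDerivAt H (H' y) y) :
    ∀ n, ∃ B' : Finset ℝ, ∀ y ∉ B', HasDerivAt ((Dop h)^[n] H) ((Dop h)^[n] H' y) y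
  | 0 => ⟨B, by simpa using hB⟩
  | n + 1 => by
    obtain ⟨Bn, hBn⟩ := iter_hasDerivAt hh B hB n
    refine ⟨Bn.image (· - h/2) ∪ Bn.image (· + h/2), fun y hy => ?_⟩
    simp only [Finset.mem_union, Finset.mem_image, not_or, not_exists, not_and] at hy
    have m1 : y + h/2 ∉ Bn := fun hc => hy.1 _ hc (by ring)
    have m2 : y - h/2 ∉ Bn := fun hc => hy.2 _ hc (by ring)
    rw [Function.iterate_succ_apply', Function.iterate_succ_apply']
    exact dop_hasDerivAt hh (hBn _ m1) (hBn _ m2)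

lemma chiPow_hasDerivAt (hh : 0 < h) (n : ℕ) :
    ∃ B : Finset ℝ, ∀ y ∉ B, HasDerivAt (chiPow h (n + 1)) (Dop h (chiPow h n) y) y := by
  obtain ⟨B₀, hB₀⟩ := contAt_chiPow hh n
  obtain ⟨C, hC0, hC⟩ := (nice_chiPow hh n).bdd
  refine ⟨B₀.image (· - h/2) ∪ B₀.image (· + h/2), fun y hy => ?_⟩
  simp only [Finset.mem_union, Finset.mem_image, not_or, not_exists, not_and] at hy
  have m1 : y + h/2 ∉ B₀ := fun hc => hy.1 _ hc (by ring)
  have m2 : y - h/2 ∉ B₀ := fun hc => hy.2 _ hc (by ring)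
  exact conv_chi_hasDerivAt hh (nice_chiPow hh n).meas hC (hB₀ _ m1) (hB₀ _ m2)

lemma hasDerivAt_conv {f G G' : ℝ → ℝ} {C : ℝ} (hh : 0 < h)
    (hfm : Measurable f) (hfC : ∀ x, |f x| ≤ C)
    (hG : Nice G) (hG' : Nice G') {L : NNReal} (hLip : LipschitzWith L G)
    (B : Finset ℝ) (hB : ∀ y ∉ B, HasDerivAt G (G' y) y) (x₀ : ℝ) :
    HasDerivAt (conv f G) (conv f G' x₀) x₀ := by
  obtain ⟨R, hR0, hRs⟩ := hG.supp
  have hC0 : 0 ≤ C := le_trans (abs_nonneg _) (hfC 0)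
  set bound : ℝ → ℝ :=
    (Set.Icc (x₀ - (R + 1)) (x₀ + (R + 1))).indicator fun _ => C * L with hbound
  have hlip : ∀ᵐ t : ℝ, LipschitzOnWith (Real.nnabs (bound t))
      (fun x => f t * G (x - t)) (Metric.ball x₀ 1) := by
    refine Filter.Eventually.of_forall fun t => ?_
    by_cases ht : t ∈ Set.Icc (x₀ - (R + 1)) (x₀ + (R + 1))
    · rw [hbound, Set.indicator_of_mem ht]
      apply LipschitzOnWith.of_dist_le_mul
      intro x _ y _
      rw [Real.dist_eq, Real.dist_eq]
      have hd := hLip.dist_le_mul (x - t) (y - t)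
      rw [Real.dist_eq, Real.dist_eq, show x - t - (y - t) = x - y by ring] at hd
      have : |f t * G (x - t) - f t * G (y - t)| = |f t| * |G (x - t) - G (y - t)| := by
        rw [← abs_mul]; ring_nf
      rw [this]
      have hcoe : (Real.nnabs (C * L) : ℝ) = C * L := by
        rw [Real.coe_nnabs, abs_of_nonneg (by positivity)]
      rw [hcoe]
      calc |f t| * |G (x - t) - G (y - t)| ≤ C * ((L : ℝ) * |x - y|) :=
            mul_le_mul (hfC t) hd (abs_nonneg _) hC0
        _ = C * (L : ℝ) * |x - y| := by ring
    · rw [hbound, Set.indicator_of_notMem ht]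
      apply LipschitzOnWith.of_dist_le_mul
      intro x hx y hy
      have hz : ∀ z ∈ Metric.ball x₀ 1, G (z - t) = 0 := by
        intro z hzb
        apply hRs
        rw [Metric.mem_ball, Real.dist_eq] at hzb
        simp only [Set.mem_Icc, not_and_or, not_le] at ht
        rcases ht with ht | ht
        · have : z - t > R := by
            have := abs_lt.1 hzb; linarith [this.1, this.2]
          rw [abs_of_pos (by linarith)]; linarith
        · have : z - t < -R := by
            have := abs_lt.1 hzb; linarith [this.1, this.2]
          rw [abs_of_neg (by linarith)]; linarith
      rw [Real.dist_eq, hz x hx, hz y hy]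
      simp [mul_nonneg]
  have hdiff : ∀ᵐ t : ℝ, HasDerivAt (fun x => f t * G (x - t)) (f t * G' (x₀ - t)) x₀ := by
    have hfin : Set.Finite {t : ℝ | x₀ - t ∈ (B : Set ℝ)} := by
      apply (B.finite_toSet.image fun b => x₀ - b).subset
      rintro t ht
      exact ⟨x₀ - t, ht, by ring⟩
    have hnull : ∀ᵐ t : ℝ, x₀ - t ∉ (B : Set ℝ) := by
      rw [ae_iff]
      convert hfin.measure_zero volume using 2
      simp [not_not]
    filter_upwards [hnull] with t ht
    have inner : HasDerivAt (fun x : ℝ => x - t) 1 x₀ := (hasDerivAt_id x₀).sub_const t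
    simpa using ((hB _ ht).comp x₀ inner).const_mul (f t)
  have key := hasDerivAt_integral_of_dominated_loc_of_lip
    (F := fun x t => f t * G (x - t)) (F' := fun t => f t * G' (x₀ - t))
    (bound := bound) (Metric.ball_mem_nhds x₀ one_pos)
    (Filter.Eventually.of_forall fun x =>
      (hfm.mul (hG.meas.comp (measurable_const.sub measurable_id))).aestronglyMeasurable)
    (conv_integrable hfm hfC hG x₀)
    ((hfm.mul (hG'.meas.comp (measurable_const.sub measurable_id))).aestronglyMeasurable)
    hlip
    ((integrable_indicator_iff measurableSet_Icc).2
      (integrableOn_const measure_Icc_lt_top.ne))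
    hdiff
  exact key.2

lemma conv_dop_right {f G : ℝ → ℝ} {C : ℝ} (hh : 0 < h) (hfm : Measurable f)
    (hfC : ∀ x, |f x| ≤ C) (hG : Nice G) (x : ℝ) :
    conv f (Dop h G) x = Dop h (conv f G) x := by
  have i1 := conv_integrable hfm hfC hG (x + h / 2)
  have i2 := conv_integrable hfm hfC hG (x - h / 2)
  have e : ∀ t : ℝ, f t * Dop h G (x - t)
      = (f t * G (x + h / 2 - t) - f t * G (x - h / 2 - t)) / h := by
    intro t
    rw [Dop, show x - t + h / 2 = x + h / 2 - t by ring,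
      show x - t - h / 2 = x - h / 2 - t by ring]
    ring
  calc conv f (Dop h G) x
      = ∫ t, (f t * G (x + h / 2 - t) - f t * G (x - h / 2 - t)) / h :=
        integral_congr_ae (Filter.Eventually.of_forall e)
    _ = ((∫ t, f t * G (x + h / 2 - t)) - ∫ t, f t * G (x - h / 2 - t)) / h := by
        rw [integral_div, integral_sub i1 i2]
    _ = Dop h (conv f G) x := rfl

lemma conv_shift_left {f G : ℝ → ℝ} (x a : ℝ) :
    (∫ t : ℝ, f (t + a) * G (x - t)) = conv f G (x + a) := by
  calc (∫ t : ℝ, f (t + a) * G (x - t))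
      = ∫ t : ℝ, (fun s => f s * G (x + a - s)) (t + a) := by
        congr 1; funext t; simp only
        rw [show x + a - (t + a) = x - t by ring]
    _ = ∫ s : ℝ, f s * G (x + a - s) :=
        integral_add_right_eq_self (fun s => f s * G (x + a - s)) a
    _ = conv f G (x + a) := rfl

lemma conv_dop_left {f G : ℝ → ℝ} {C : ℝ} (hh : 0 < h) (hfm : Measurable f)
    (hfC : ∀ x, |f x| ≤ C) (hG : Nice G) (x : ℝ) :
    conv (Dop h f) G x = Dop h (conv f G) x := by
  have i1 : Integrable (fun t => f (t + h / 2) * G (x - t)) :=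
    conv_integrable (hfm.comp (measurable_add_const (h / 2)))
      (fun t => hfC (t + h / 2)) hG x
  have i2 : Integrable (fun t => f (t + -(h / 2)) * G (x - t)) :=
    conv_integrable (hfm.comp (measurable_add_const (-(h / 2))))
      (fun t => hfC (t + -(h / 2))) hG x
  have e : ∀ t : ℝ, Dop h f t * G (x - t)
      = (f (t + h / 2) * G (x - t) - f (t + -(h / 2)) * G (x - t)) / h := by
    intro t
    rw [Dop, show t - h / 2 = t + -(h / 2) by ring]
    ring
  calc conv (Dop h f) G x
      = ∫ t, (f (t + h / 2) * G (x - t) - f (t + -(h / 2)) * G (x - t)) / h :=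
        integral_congr_ae (Filter.Eventually.of_forall e)
    _ = ((∫ t, f (t + h / 2) * G (x - t)) - ∫ t, f (t + -(h / 2)) * G (x - t)) / h := by
        rw [integral_div, integral_sub i1 i2]
    _ = (conv f G (x + h / 2) - conv f G (x + -(h / 2))) / h := by
        rw [conv_shift_left, conv_shift_left]
    _ = Dop h (conv f G) x := by rw [Dop, show x - h / 2 = x + -(h / 2) by ring]

lemma dop_meas {f : ℝ → ℝ} (hfm : Measurable f) : Measurable (Dop h f) := by
  unfold Dop; fun_prop

lemma dop_bdd {f : ℝ → ℝ} {C : ℝ} (hh : 0 < h) (hfC : ∀ x, |f x| ≤ C) :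
    ∀ x, |Dop h f x| ≤ 2 * C / h := by
  intro x
  rw [Dop, abs_div, abs_of_pos hh, div_le_div_iff_of_pos_right hh]
  calc |f (x + h/2) - f (x - h/2)| ≤ |f (x + h/2)| + |f (x - h/2)| := abs_sub _ _
    _ ≤ C + C := add_le_add (hfC _) (hfC _)
    _ = 2 * C := by ring

lemma dop_iter_meas_bdd {f : ℝ → ℝ} {C : ℝ} (hh : 0 < h) (hfm : Measurable f)
    (hfC : ∀ x, |f x| ≤ C) :
    ∀ n, Measurable ((Dop h)^[n] f) ∧ ∃ C', ∀ x, |(Dop h)^[n] f x| ≤ C'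
  | 0 => ⟨hfm, C, hfC⟩
  | n + 1 => by
    obtain ⟨hm, C', hC'⟩ := dop_iter_meas_bdd hh hfm hfC n
    rw [Function.iterate_succ_apply']
    exact ⟨dop_meas hm, 2 * C' / h, dop_bdd hh hC'⟩

lemma dop_contAt {f : ℝ → ℝ} (S : Finset ℝ) (hS : ∀ x ∉ S, ContinuousAt f x) :
    ∀ x ∉ S.image (· - h/2) ∪ S.image (· + h/2), ContinuousAt (Dop h f) x := by
  intro x hx
  simp only [Finset.mem_union, Finset.mem_image, not_or, not_exists, not_and] at hx
  have m1 : x + h/2 ∉ S := fun hc => hx.1 _ hc (by ring)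
  have m2 : x - h/2 ∉ S := fun hc => hx.2 _ hc (by ring)
  have c1 : ContinuousAt (fun z : ℝ => f (z + h/2)) x :=
    ContinuousAt.comp (g := f) (f := fun z : ℝ => z + h / 2) (hS _ m1)
      ((continuous_id.add continuous_const).continuousAt)
  have c2 : ContinuousAt (fun z : ℝ => f (z - h/2)) x :=
    ContinuousAt.comp (g := f) (f := fun z : ℝ => z - h / 2) (hS _ m2)
      ((continuous_id.sub continuous_const).continuousAt)
  exact (c1.sub c2).div_const h

lemma dop_iter_contAt {f : ℝ → ℝ} (S : Finset ℝ) (hS : ∀ x ∉ S, ContinuousAt f x) :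
    ∀ n, ∃ S' : Finset ℝ, ∀ x ∉ S', ContinuousAt ((Dop h)^[n] f) x
  | 0 => ⟨S, hS⟩
  | n + 1 => by
    obtain ⟨S', hS'⟩ := dop_iter_contAt S hS n
    rw [Function.iterate_succ_apply']
    exact ⟨S'.image (· - h/2) ∪ S'.image (· + h/2), dop_contAt S' hS'⟩

lemma fwdDiff_shift_smul (g : ℝ → ℝ) (c a : ℝ) :
    ∀ n y, (fwdDiff h)^[n] (fun z => c * g (z + a)) y = c * (fwdDiff h)^[n] g (y + a)
  | 0, y => by simp
  | n + 1, y => by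
    rw [Function.iterate_succ_apply]
    have e : fwdDiff h (fun z => c * g (z + a)) = fun z => c * (fwdDiff h g) (z + a) := by
      funext z
      simp only [fwdDiff]
      rw [show z + h + a = z + a + h by ring]
      ring
    rw [e, fwdDiff_shift_smul (fwdDiff h g) c a n y, ← Function.iterate_succ_apply]

lemma dop_iter_eq (hh : 0 < h) (f : ℝ → ℝ) :
    ∀ n x, (Dop h)^[n] f x = (h ^ n)⁻¹ * (fwdDiff h)^[n] f (x - n * (h / 2))
  | 0, x => by simp
  | n + 1, x => by
    rw [Function.iterate_succ_apply, dop_iter_eq hh (Dop h f) n x]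
    have e : Dop h f = fun y => (1 / h) * (fwdDiff h f) (y + -(h / 2)) := by
      funext y
      rw [Dop, fwdDiff]
      rw [show y + -(h / 2) + h = y + h / 2 by ring, show y + -(h / 2) = y - h / 2 by ring]
      ring
    rw [e, fwdDiff_shift_smul (fwdDiff h f) (1 / h) (-(h / 2)) n (x - n * (h / 2)),
      ← Function.iterate_succ_apply]
    rw [show x - ↑n * (h / 2) + -(h / 2) = x - (↑(n + 1) : ℕ) * (h / 2) by push_cast; ring]
    rw [pow_succ]
    field_simp

lemma dop_iter_centered (hh : 0 < h) (f : ℝ → ℝ) (k : ℕ) (x : ℝ) :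
    (Dop h)^[2 * k] f x = (h ^ (2 * k))⁻¹ * centeredDiff h k f x := by
  rw [dop_iter_eq hh f (2 * k) x, fwdDiff_iter_eq_sum_shift, centeredDiff]
  congr 1
  apply Finset.sum_congr rfl
  intro j hj
  rw [zsmul_eq_mul]
  have harg : x - (↑(2 * k) : ℕ) * (h / 2) + j • h = x + j * h - k * h := by
    rw [nsmul_eq_mul]; push_cast; ring
  rw [harg]
  push_cast
  ring

lemma conv_dop_iter {f : ℝ → ℝ} {C : ℝ} (hh : 0 < h) (hfm : Measurable f)
    (hfC : ∀ x, |f x| ≤ C) :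
    ∀ n, ∀ x, conv f ((Dop h)^[n] (chi h)) x = conv ((Dop h)^[n] f) (chi h) x
  | 0, x => by simp
  | n + 1, x => by
    obtain ⟨hm, C', hC'⟩ := dop_iter_meas_bdd hh hfm hfC n
    have IH := conv_dop_iter hh hfm hfC n
    calc conv f ((Dop h)^[n + 1] (chi h)) x
        = conv f (Dop h ((Dop h)^[n] (chi h))) x := by
          rw [Function.iterate_succ_apply']
      _ = Dop h (conv f ((Dop h)^[n] (chi h))) x :=
          conv_dop_right hh hfm hfC (nice_dop_iter hh (nice_chi hh) n) x
      _ = Dop h (conv ((Dop h)^[n] f) (chi h)) x := by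
          rw [funext IH]
      _ = conv (Dop h ((Dop h)^[n] f)) (chi h) x :=
          (conv_dop_left hh hm hC' (nice_chi hh) x).symm
      _ = conv ((Dop h)^[n + 1] f) (chi h) x := by
          rw [Function.iterate_succ_apply']

lemma ae_notin_finset (T : Finset ℝ) : ∀ᵐ x : ℝ ∂volume, x ∉ (T : Set ℝ) :=
  measure_eq_zero_iff_ae_notMem.mp (T.finite_toSet.measure_zero _)

end ConvAux

open ConvAux in
theorem conv_power_iterated_deriv (f : ℝ → ℝ) (h : ℝ) (hh : 0 < h) (k : ℕ) (hk : 1 ≤ k)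
    (hf_meas : Measurable f) (hf_bdd : ∃ C : ℝ, ∀ x, |f x| ≤ C)
    (hf_cont : ∃ S : Finset ℝ, ∀ x ∉ S, ContinuousAt f x) :
    ∃ g : ℕ → ℝ → ℝ,
      g 0 = conv f (chiPow h (2 * k - 1)) ∧
      (∀ i < 2 * k, ∀ᵐ x : ℝ ∂volume, HasDerivAt (g i) (g (i + 1) x) x) ∧
      (∀ᵐ x : ℝ ∂volume, g (2 * k) x = (h ^ (2 * k))⁻¹ * centeredDiff h k f x) := by
  classical
  obtain ⟨C, hfC⟩ := hf_bdd
  obtain ⟨S, hS⟩ := hf_cont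
  set g : ℕ → ℝ → ℝ := fun i =>
    if i < 2 * k then conv f ((Dop h)^[i] (chiPow h (2 * k - 1 - i)))
    else fun x => (h ^ (2 * k))⁻¹ * centeredDiff h k f x with hg
  have hlt : ∀ i, i < 2 * k → g i = conv f ((Dop h)^[i] (chiPow h (2 * k - 1 - i))) := by
    intro i hi; rw [hg]; simp only [if_pos hi]
  have hge : g (2 * k) = fun x => (h ^ (2 * k))⁻¹ * centeredDiff h k f x := by
    rw [hg]; simp only [if_neg (lt_irrefl (2 * k))]
  refine ⟨g, ?_, ?_, ?_⟩
  · rw [hlt 0 (by omega), Function.iterate_zero, id_eq, Nat.sub_zero]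
  · intro i hi
    by_cases hi1 : i + 1 < 2 * k
    · -- interior case: differentiate under the integral
      refine Filter.Eventually.of_forall fun x => ?_
      rw [hlt i hi, hlt (i + 1) hi1]
      have e1 : 2 * k - 1 - i = (2 * k - 2 - i) + 1 := by omega
      have e2 : 2 * k - 1 - (i + 1) = 2 * k - 2 - i := by omega
      rw [e1, e2]
      set n := 2 * k - 2 - i with hn
      obtain ⟨B, hB⟩ := chiPow_hasDerivAt hh (h := h) n
      obtain ⟨B', hB'⟩ := iter_hasDerivAt hh B hB i
      obtain ⟨Cn, hCn0, hCn⟩ := (nice_chiPow hh n).bdd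
      have hlip : ∃ L, LipschitzWith L (chiPow h (n + 1)) :=
        ⟨_, conv_chi_lipschitz hh (nice_chiPow hh n).meas hCn⟩
      obtain ⟨L, hL⟩ := lip_dop_iter hh hlip i
      have key := hasDerivAt_conv hh hf_meas hfC
        (nice_dop_iter hh (nice_chiPow hh (n + 1)) i)
        (nice_dop_iter hh (nice_dop hh (nice_chiPow hh n)) i)
        hL B' hB' x
      rw [Function.iterate_succ_apply]
      exact key
    · -- last step: fundamental theorem of calculus
      have hieq : i = 2 * k - 1 := by omega
      have hi2 : i + 1 = 2 * k := by omega
      have e0 : 2 * k - 1 - i = 0 := by omega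
      rw [hlt _ hi, hi2, hge, e0, hieq]
      have hfun : conv f ((Dop h)^[2 * k - 1] (chiPow h 0))
          = conv ((Dop h)^[2 * k - 1] f) (chi h) :=
        funext (conv_dop_iter hh hf_meas hfC (2 * k - 1))
      rw [hfun]
      obtain ⟨hm, C', hC'⟩ := dop_iter_meas_bdd hh hf_meas hfC (2 * k - 1)
      obtain ⟨S', hS'⟩ := dop_iter_contAt (h := h) S hS (2 * k - 1)
      filter_upwards [ae_notin_finset (S'.image (· - h/2) ∪ S'.image (· + h/2))] with x hx
      simp only [Finset.coe_union, Set.mem_union, Finset.coe_image, Set.mem_image,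
        Finset.mem_coe, not_or, not_exists, not_and] at hx
      have m1 : x + h/2 ∉ S' := fun hc => hx.1 _ hc (by ring)
      have m2 : x - h/2 ∉ S' := fun hc => hx.2 _ hc (by ring)
      have key := conv_chi_hasDerivAt hh hm hC' (hS' _ m1) (hS' _ m2)
      have hkey2 : Dop h ((Dop h)^[2 * k - 1] f) x = (h ^ (2 * k))⁻¹ * centeredDiff h k f x := by
        rw [← dop_iter_centered hh f k x]
        conv_rhs => rw [show 2 * k = (2 * k - 1) + 1 by omega]
        rw [Function.iterate_succ_apply']
      rw [← hkey2]
      exact key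
  · rw [hge]
    exact Filter.Eventually.of_forall fun x => rfl
end

section
/- For k ≥ 2 and 0 < ε < 1/k, the function f_ε : [-1,1] → ℝ defined by f_ε(x) = ((-1)^{k-1}/ε^{k-1})(1 + x - ε)^{k-1} for -1 ≤ x ≤ -1 + ε and f_ε(x) = 0 for -1 + ε < x ≤ 1, satisfies |Δ_h^k f_ε(x)| ≤ 1 for all h > 0 and all x with x, x + kh ∈ [-1, 1], where Δ_h^k f(x) = ∑_{j=0}^{k} (-1)^{k-j} C(k,j) f(x + jh). -/
open scoped fwdDiff

lemma maxpow_hasDerivAt (n : ℕ) (hn : 2 ≤ n) (v : ℝ) :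
    HasDerivAt (fun u : ℝ => max u 0 ^ n) (n * max v 0 ^ (n - 1)) v := by
  rcases lt_trichotomy v 0 with hv | hv | hv
  · have hev : (fun u : ℝ => max u 0 ^ n) =ᶠ[nhds v] fun _ => 0 := by
      filter_upwards [eventually_lt_nhds hv] with u hu
      simp [max_eq_right hu.le, zero_pow (by omega : n ≠ 0)]
    have : HasDerivAt (fun _ : ℝ => (0:ℝ)) 0 v := hasDerivAt_const v 0
    have h0 : (n : ℝ) * max v 0 ^ (n-1) = 0 := by
      simp [max_eq_right hv.le, zero_pow (by omega : n - 1 ≠ 0)]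
    rw [h0]
    exact this.congr_of_eventuallyEq hev
  · subst hv
    have h0 : (n : ℝ) * max (0:ℝ) 0 ^ (n-1) = 0 := by
      simp [zero_pow (by omega : n - 1 ≠ 0)]
    rw [h0, hasDerivAt_iff_tendsto_slope]
    have htend : Filter.Tendsto (fun u : ℝ => |u| ^ (n-1)) (nhdsWithin 0 {(0:ℝ)}ᶜ) (nhds 0) := by
      have : Filter.Tendsto (fun u : ℝ => |u| ^ (n-1)) (nhds 0) (nhds 0) := by
        have := Continuous.tendsto (f := fun u : ℝ => |u| ^ (n-1)) (by fun_prop) (0:ℝ)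
        simpa [zero_pow (by omega : n - 1 ≠ 0)] using this
      exact this.mono_left nhdsWithin_le_nhds
    refine squeeze_zero_norm' ?_ htend
    · filter_upwards [self_mem_nhdsWithin] with u (hu : u ≠ 0)
      have : slope (fun u : ℝ => max u 0 ^ n) 0 u = max u 0 ^ n / u := by
        simp [slope, zero_pow (by omega : n ≠ 0), div_eq_inv_mul]
      rw [this]
      rw [Real.norm_eq_abs, abs_div]
      rcases le_total u 0 with h | h
      · simp [max_eq_right h, zero_pow (by omega : n ≠ 0)]
      · rw [max_eq_left h, abs_pow]
        rw [div_le_iff₀ (by simpa [abs_pos] using hu)]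
        rw [← pow_succ]
        have : n - 1 + 1 = n := by omega
        rw [this]
  · have hev : (fun u : ℝ => max u 0 ^ n) =ᶠ[nhds v] fun u => u ^ n := by
      filter_upwards [eventually_gt_nhds hv] with u hu
      simp [max_eq_left hu.le]
    have : HasDerivAt (fun u : ℝ => u ^ n) (n * v ^ (n-1)) v := hasDerivAt_pow n v
    rw [max_eq_left hv.le]
    exact this.congr_of_eventuallyEq hev

lemma trunc_hasDerivAt (c : ℝ) (m : ℕ) (hm : 1 ≤ m) (s : ℝ) :
    HasDerivAt (fun u : ℝ => max (c - u) 0 ^ (m + 1))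
      (-((m + 1 : ℝ) * max (c - s) 0 ^ m)) s := by
  have h1 : HasDerivAt (fun u : ℝ => c - u) (-1) s := by
    simpa using (hasDerivAt_id s).const_sub c
  have h2 := (maxpow_hasDerivAt (m + 1) (by omega) (c - s)).comp s h1
  refine h2.congr_deriv ?_
  rw [Nat.add_sub_cancel]
  push_cast
  ring

lemma trunc_cont (c : ℝ) (m : ℕ) : Continuous (fun u : ℝ => max (c - u) 0 ^ m) :=
  ((continuous_const.sub continuous_id).max continuous_const).pow m

lemma trunc_integral (c : ℝ) (m : ℕ) (hm : 1 ≤ m) (t h : ℝ) :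
    ∫ s in t..(t + h), max (c - s) 0 ^ m =
      (max (c - t) 0 ^ (m + 1) - max (c - (t + h)) 0 ^ (m + 1)) / (m + 1) := by
  have key := intervalIntegral.integral_eq_sub_of_hasDerivAt
    (f := fun u : ℝ => max (c - u) 0 ^ (m + 1) / (-(m + 1 : ℝ)))
    (f' := fun u : ℝ => max (c - u) 0 ^ m)
    (a := t) (b := t + h) ?_ ?_
  · rw [key, div_neg, div_neg]; ring
  · intro s hs
    have := (trunc_hasDerivAt c m hm s).div_const (-(m + 1 : ℝ))
    refine this.congr_deriv ?_
    have hne : (-(m + 1 : ℝ)) ≠ 0 := by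
      have : (0:ℝ) < m + 1 := by positivity
      linarith
    show -((m + 1 : ℝ) * max (c - s) 0 ^ m) / -(m + 1 : ℝ) = max (c - s) 0 ^ m
    rw [div_eq_iff hne]; ring
  · exact ((trunc_cont c m).intervalIntegrable t (t + h))

lemma fwdDiff_cont {h : ℝ} {f : ℝ → ℝ} (hf : Continuous f) (n : ℕ) :
    Continuous (Δ_[h] ^[n] f) := by
  induction n with
  | zero => simpa using hf
  | succ n ih =>
    rw [Function.iterate_succ_apply']
    exact (ih.comp (continuous_id.add continuous_const)).sub ih

lemma key_bound (c h : ℝ) (hh : 0 < h) : ∀ m : ℕ, 1 ≤ m → ∀ x : ℝ,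
    |Δ_[h] ^[m + 1] (fun t : ℝ => max (c - t) 0 ^ m) x| ≤ max (c - x) 0 ^ m := by
  intro m
  induction m with
  | zero => omega
  | succ m ih =>
    intro _ x
    rcases Nat.eq_zero_or_pos m with rfl | hm
    · -- base case : second difference of a piecewise linear convex function
      have e : Δ_[h] ^[0 + 1 + 1] (fun t : ℝ => max (c - t) 0 ^ (0 + 1)) x
          = max (c - (x + h + h)) 0 - 2 * max (c - (x + h)) 0 + max (c - x) 0 := by
        simp only [Function.iterate_succ_apply', Function.iterate_zero_apply, fwdDiff, pow_one]
        ring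
      rw [e, pow_one]
      have h1 : (0:ℝ) ≤ max (c - (x + h + h)) 0 := le_max_right _ _
      have h2 : (0:ℝ) ≤ max (c - (x + h)) 0 := le_max_right _ _
      have h3 : (0:ℝ) ≤ max (c - x) 0 := le_max_right _ _
      have hmono1 : max (c - (x + h + h)) 0 ≤ max (c - (x + h)) 0 :=
        max_le_max (by linarith) le_rfl
      have hconv : 2 * max (c - (x + h)) 0 ≤ max (c - (x + h + h)) 0 + max (c - x) 0 := by
        rcases le_total (c - (x + h)) 0 with hc | hc
        · rw [max_eq_right hc]; linarith
        · rw [max_eq_left hc]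
          have := le_max_left (c - (x + h + h)) 0
          have := le_max_left (c - x) 0
          linarith
      rw [abs_le]
      constructor <;> linarith
    · -- inductive step
      have hdq : Δ_[h] (fun t : ℝ => max (c - t) 0 ^ (m + 1))
          = (-(m + 1 : ℝ)) • fun t : ℝ => ∫ s in (0:ℝ)..h, max (c - (t + s)) 0 ^ m := by
        funext t
        have h1 : (∫ s in (0:ℝ)..h, max (c - (t + s)) 0 ^ m)
            = ∫ s in t..(t + h), max (c - s) 0 ^ m := by
          rw [intervalIntegral.integral_comp_add_left (fun s => max (c - s) 0 ^ m) t]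
          norm_num
        simp only [fwdDiff, Pi.smul_apply, smul_eq_mul]
        rw [h1, trunc_integral c m hm t h]
        have hne : ((m:ℝ) + 1) ≠ 0 := by positivity
        field_simp
        ring
      have hiter : Δ_[h] ^[m + 1 + 1] (fun t : ℝ => max (c - t) 0 ^ (m + 1)) x
          = ((-(m + 1 : ℝ)) • Δ_[h] ^[m + 1]
              (fun t : ℝ => ∫ s in (0:ℝ)..h, max (c - (t + s)) 0 ^ m)) x := by
        rw [Function.iterate_succ_apply, hdq, fwdDiff_iter_const_smul]
      -- swap fwdDiff (a finite sum) with the integral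
      have hswap : Δ_[h] ^[m + 1] (fun t : ℝ => ∫ s in (0:ℝ)..h, max (c - (t + s)) 0 ^ m) x
          = ∫ s in (0:ℝ)..h, Δ_[h] ^[m + 1] (fun t : ℝ => max (c - t) 0 ^ m) (x + s) := by
        rw [fwdDiff_iter_eq_sum_shift]
        have hrhs : ∀ s : ℝ, Δ_[h] ^[m + 1] (fun t : ℝ => max (c - t) 0 ^ m) (x + s)
            = ∑ j ∈ Finset.range (m + 2),
                ((-1:ℤ) ^ (m + 1 - j) * (m + 1).choose j) • max (c - (x + j • h + s)) 0 ^ m := by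
          intro s
          rw [fwdDiff_iter_eq_sum_shift]
          refine Finset.sum_congr rfl fun j _ => ?_
          congr 2
          rw [add_right_comm]
        have : (fun s : ℝ => Δ_[h] ^[m + 1] (fun t : ℝ => max (c - t) 0 ^ m) (x + s))
            = fun s : ℝ => ∑ j ∈ Finset.range (m + 2),
                ((-1:ℤ) ^ (m + 1 - j) * (m + 1).choose j) • max (c - (x + j • h + s)) 0 ^ m :=
          funext hrhs
        rw [this, intervalIntegral.integral_finset_sum]
        · refine Finset.sum_congr rfl fun j _ => ?_
          simp only [zsmul_eq_mul]
          rw [intervalIntegral.integral_const_mul]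
        · intro j _
          exact (Continuous.intervalIntegrable (by fun_prop) 0 h)
      rw [hiter, Pi.smul_apply, hswap, smul_eq_mul, abs_mul]
      have habs1 : |(-(m + 1 : ℝ))| = (m:ℝ) + 1 := by
        rw [abs_neg, abs_of_nonneg (by positivity)]
      rw [habs1]
      have hcontG : Continuous (fun s : ℝ =>
          Δ_[h] ^[m + 1] (fun t : ℝ => max (c - t) 0 ^ m) (x + s)) :=
        (fwdDiff_cont (trunc_cont c m) (m + 1)).comp (continuous_const.add continuous_id)
      have hint1 : |∫ s in (0:ℝ)..h, Δ_[h] ^[m + 1] (fun t : ℝ => max (c - t) 0 ^ m) (x + s)|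
          ≤ ∫ s in (0:ℝ)..h, |Δ_[h] ^[m + 1] (fun t : ℝ => max (c - t) 0 ^ m) (x + s)| :=
        intervalIntegral.abs_integral_le_integral_abs hh.le
      have hint2 : (∫ s in (0:ℝ)..h, |Δ_[h] ^[m + 1] (fun t : ℝ => max (c - t) 0 ^ m) (x + s)|)
          ≤ ∫ s in (0:ℝ)..h, max (c - (x + s)) 0 ^ m := by
        apply intervalIntegral.integral_mono_on hh.le
        · exact (hcontG.abs.intervalIntegrable 0 h)
        · exact (Continuous.intervalIntegrable (by fun_prop) 0 h)
        · intro s _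
          exact ih hm (x + s)
      have hval : (∫ s in (0:ℝ)..h, max (c - (x + s)) 0 ^ m)
          = (max (c - x) 0 ^ (m + 1) - max (c - (x + h)) 0 ^ (m + 1)) / (m + 1) := by
        rw [intervalIntegral.integral_comp_add_left (fun s => max (c - s) 0 ^ m) x]
        norm_num
        rw [trunc_integral c m hm x h]
      have hnn : (0:ℝ) ≤ max (c - (x + h)) 0 ^ (m + 1) := by positivity
      have hfinal : ((m:ℝ) + 1) *
          (∫ s in (0:ℝ)..h, max (c - (x + s)) 0 ^ m) ≤ max (c - x) 0 ^ (m + 1) := by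
        rw [hval]
        have hne : ((m:ℝ) + 1) ≠ 0 := by positivity
        rw [mul_div_cancel₀ _ hne]
        linarith
      calc ((m:ℝ) + 1) * |∫ s in (0:ℝ)..h, Δ_[h] ^[m + 1] (fun t : ℝ => max (c - t) 0 ^ m) (x + s)|
          ≤ ((m:ℝ) + 1) * (∫ s in (0:ℝ)..h, max (c - (x + s)) 0 ^ m) := by
            have := hint1.trans hint2
            nlinarith [this]
        _ ≤ max (c - x) 0 ^ (m + 1) := hfinal

theorem diff_bound_extremal_function (k : ℕ) (hk : 2 ≤ k) (ε : ℝ) (hε : 0 < ε)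
    (hεk : ε < 1 / k) (h : ℝ) (hh : 0 < h) (x : ℝ) (hx : -1 ≤ x) (hxk : x + k * h ≤ 1) :
    |∑ j ∈ Finset.range (k + 1),
        (-1 : ℝ) ^ (k - j) * (Nat.choose k j : ℝ) *
          (if x + j * h ≤ -1 + ε then
            ((-1 : ℝ) ^ (k - 1) / ε ^ (k - 1)) * (1 + (x + j * h) - ε) ^ (k - 1)
          else 0)| ≤ 1 := by
  obtain ⟨m, rfl⟩ : ∃ m, k = m + 2 := ⟨k - 2, by omega⟩
  have hm1 : m + 2 - 1 = m + 1 := rfl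
  have hεpow : (0:ℝ) < ε ^ (m + 1) := pow_pos hε _
  have hfeq : ∀ y : ℝ,
      (if y ≤ -1 + ε then
        ((-1:ℝ) ^ (m + 2 - 1) / ε ^ (m + 2 - 1)) * (1 + y - ε) ^ (m + 2 - 1) else 0)
        = max ((-1 + ε) - y) 0 ^ (m + 1) / ε ^ (m + 1) := by
    intro y
    rw [hm1]
    split_ifs with hy
    · have h1 : max ((-1 + ε) - y) 0 = (-1 + ε) - y := max_eq_left (by linarith)
      rw [h1]
      have h2 : (1 + y - ε : ℝ) = -((-1 + ε) - y) := by ring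
      have h3 : ((-1:ℝ)) ^ (m + 1) * ((-1:ℝ)) ^ (m + 1) = 1 := by
        rw [← pow_add]
        exact Even.neg_one_pow ⟨m + 1, by ring⟩
      rw [h2, neg_pow (-1 + ε - y), div_mul_eq_mul_div, ← mul_assoc, h3, one_mul]
    · have h1 : max ((-1 + ε) - y) 0 = 0 := max_eq_right (by linarith)
      rw [h1, zero_pow (by omega : m + 1 ≠ 0), zero_div]
  have hsum : ∑ j ∈ Finset.range (m + 2 + 1),
      (-1 : ℝ) ^ (m + 2 - j) * ((m + 2).choose j : ℝ) *
        (if x + j * h ≤ -1 + ε then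
          ((-1:ℝ) ^ (m + 2 - 1) / ε ^ (m + 2 - 1)) * (1 + (x + j * h) - ε) ^ (m + 2 - 1)
        else 0)
      = (Δ_[h] ^[m + 2] (fun t : ℝ => max ((-1 + ε) - t) 0 ^ (m + 1)) x) / ε ^ (m + 1) := by
    rw [fwdDiff_iter_eq_sum_shift, Finset.sum_div]
    refine Finset.sum_congr rfl fun j _ => ?_
    rw [hfeq (x + j * h)]
    simp only [zsmul_eq_mul, nsmul_eq_mul]
    push_cast
    ring
  rw [hsum, abs_div, abs_of_pos hεpow, div_le_one hεpow]
  refine (key_bound (-1 + ε) h hh (m + 1) (by omega) x).trans ?_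
  have hle : max ((-1 + ε) - x) 0 ≤ ε := max_le (by linarith) hε.le
  exact pow_le_pow_left₀ (le_max_right _ _) hle (m + 1)
end

section
/- The function x ↦ 2 sec(π/(2x)) - 1 - (π²/8)/x² is strictly decreasing on (1, ∞). -/
open Real

theorem strictAntiOn_two_sec_sub :
    StrictAntiOn (fun x : ℝ => 2 * (1 / Real.cos (π / (2 * x))) - 1 - (π ^ 2 / 8) / x ^ 2)
      (Set.Ioi 1) := by
  have hπ : (0:ℝ) < π := Real.pi_pos
  have hder : ∀ x ∈ Set.Ioi (1:ℝ), HasDerivAt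
      (fun x : ℝ => 2 * (1 / Real.cos (π / (2 * x))) - 1 - (π ^ 2 / 8) / x ^ 2)
      (2 * (-(-Real.sin (π / (2 * x)) * (π * (-(2 * 1) / (2 * x) ^ 2))) /
          Real.cos (π / (2 * x)) ^ 2)
        - (π ^ 2 / 8) * (-(↑2 * x ^ 1) / (x ^ 2) ^ 2)) x := by
    intro x hx
    have hx1 : (1:ℝ) < x := hx
    have hx0 : (0:ℝ) < x := by linarith
    have hu2 : π / (2 * x) < π / 2 := by
      apply div_lt_div_of_pos_left hπ (by norm_num) (by linarith)
    have hc : 0 < Real.cos (π / (2 * x)) := Real.cos_pos_of_mem_Ioo ⟨by nlinarith [div_pos hπ (by linarith : (0:ℝ) < 2*x)], hu2⟩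
    have h1 : HasDerivAt (fun y : ℝ => π / (2 * y)) (π * (-(2 * 1) / (2 * x) ^ 2)) x := by
      have h2 : HasDerivAt (fun y : ℝ => 2 * y) (2 * 1) x := (hasDerivAt_id x).const_mul 2
      exact (h2.inv (by positivity)).const_mul π
    have h3 : HasDerivAt (fun y : ℝ => Real.cos (π / (2 * y)))
        (-Real.sin (π / (2 * x)) * (π * (-(2 * 1) / (2 * x) ^ 2))) x := h1.cos
    have h4 := (h3.inv hc.ne').const_mul 2
    have h5 : HasDerivAt (fun y : ℝ => (π ^ 2 / 8) / y ^ 2)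
        ((π ^ 2 / 8) * (-(↑2 * x ^ 1) / (x ^ 2) ^ 2)) x :=
      ((hasDerivAt_pow 2 x).inv (by positivity)).const_mul (π ^ 2 / 8)
    have h6 := (h4.sub_const 1).sub h5
    refine h6.congr_of_eventuallyEq (Filter.Eventually.of_forall fun y => ?_)
    simp only [Pi.sub_apply, Pi.inv_apply, one_div]
  apply strictAntiOn_of_deriv_neg (convex_Ioi 1)
  · exact fun x hx => (hder x hx).continuousAt.continuousWithinAt
  · intro x hx
    rw [interior_Ioi] at hx
    rw [(hder x hx).deriv]
    have hx1 : (1:ℝ) < x := hx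
    have hx0 : (0:ℝ) < x := by linarith
    have hu0 : 0 < π / (2 * x) := by positivity
    have hu2 : π / (2 * x) < π / 2 := by
      apply div_lt_div_of_pos_left hπ (by norm_num) (by linarith)
    have hc : 0 < Real.cos (π / (2 * x)) := Real.cos_pos_of_mem_Ioo ⟨by nlinarith [div_pos hπ (by linarith : (0:ℝ) < 2*x)], hu2⟩
    set s := Real.sin (π / (2 * x)) with hs_def
    set c := Real.cos (π / (2 * x)) with hc_def
    have hs : 1 / x ≤ s := by
      have := Real.mul_le_sin hu0.le hu2.le
      calc 1 / x = 2 / π * (π / (2 * x)) := by field_simp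
        _ ≤ s := this
    have hc1 : c ≤ 1 := Real.cos_le_one _
    have hπ4 : π < 4 := by linarith [Real.pi_lt_d2]
    have hxs : 1 ≤ x * s := by
      rw [div_le_iff₀ hx0] at hs; linarith [hs]
    have hxne : x ≠ 0 := hx0.ne'
    have hcne : c ≠ 0 := hc.ne'
    have e1 : 2 * (-(-s * (π * (-(2 * 1) / (2 * x) ^ 2))) / c ^ 2)
        = -(s * π / (x ^ 2 * c ^ 2)) := by
      field_simp
    have e2 : (π ^ 2 / 8) * (-(↑2 * x ^ 1) / (x ^ 2) ^ 2) = -(π ^ 2 / (4 * x ^ 3)) := by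
      push_cast
      field_simp
      ring
    rw [e1, e2]
    have hc2 : c ^ 2 ≤ 1 := by nlinarith
    have key : π ^ 2 / (4 * x ^ 3) < s * π / (x ^ 2 * c ^ 2) := by
      rw [div_lt_div_iff₀ (by positivity) (by positivity)]
      nlinarith [mul_le_mul_of_nonneg_left hc2 (by positivity : (0:ℝ) ≤ π ^ 2 * x ^ 2),
        mul_lt_mul_of_pos_right hπ4 (mul_pos hπ (pow_pos hx0 2)),
        mul_le_mul_of_nonneg_left hxs (by positivity : (0:ℝ) ≤ 4 * π * x ^ 2)]
    linarith
end
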